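/- Let X be a Tychonoff (completely regular Hausdorff) topological space and let I and J be ideals of C(X). Then I·Ann(J) = {0} if and only if O(I) is contained in the closure of O(J). -/
import Mathlib


open Set

/-- `cozUnion S` is `O(S)`: the union of the cozero sets of the members of `S ⊆ C(X, ℝ)`. -/
def cozUnion {X : Type*} [TopologicalSpace X] (S : Set C(X, ℝ)) : Set X :=
  ⋃ f ∈ S, {x : X | f x ≠ 0}

/-- `annIdeal I` is `Ann(I)`, the annihilator of the ideal `I` of `C(X, ℝ)`. -/
def annIdeal {X : Type*} [TopologicalSpace X] (I : Ideal C(X, ℝ)) : Ideal C(X, ℝ) where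
  carrier := {g | ∀ f ∈ I, g * f = 0}
  add_mem' := by
    intro a b ha hb f hf
    rw [add_mul, ha f hf, hb f hf, add_zero]
  zero_mem' := fun f _ => zero_mul f
  smul_mem' := by
    intro c g hg f hf
    rw [smul_eq_mul, mul_assoc, hg f hf, mul_zero]

/-- For ideals `I`, `J` of `C(X)`, `X` Tychonoff: `I·Ann(J) = {0}` iff
`O(I) ⊆ closure (O(J))`. -/
theorem mul_annIdeal_eq_bot_iff {X : Type*} [TopologicalSpace X] [T35Space X]
    (I J : Ideal C(X, ℝ)) :
    I * annIdeal J = ⊥ ↔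
      cozUnion ((I : Ideal C(X, ℝ)) : Set C(X, ℝ)) ⊆
        closure (cozUnion ((J : Ideal C(X, ℝ)) : Set C(X, ℝ))) := by
  constructor
  · intro hbot x hx
    simp only [cozUnion, mem_iUnion, mem_setOf_eq] at hx
    obtain ⟨f, hfI, hfx⟩ := hx
    by_contra hxc
    obtain ⟨g, cg, hgx, hgK⟩ := CompletelyRegularSpace.completely_regular x
      (closure (cozUnion ((J : Ideal C(X, ℝ)) : Set C(X, ℝ)))) isClosed_closure hxc
    set G : C(X, ℝ) := ⟨fun y => 1 - (g y : ℝ), by fun_prop⟩ with hG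
    have hGann : G ∈ annIdeal J := by
      intro h hh
      ext y
      by_cases hy : h y = 0
      · simp [hy]
      · have hy' : y ∈ cozUnion ((J : Ideal C(X, ℝ)) : Set C(X, ℝ)) := by
          simp only [cozUnion, mem_iUnion, mem_setOf_eq]
          exact ⟨h, hh, hy⟩
        have := hgK (subset_closure hy')
        simp only [ContinuousMap.mul_apply, ContinuousMap.zero_apply, hG,
          ContinuousMap.coe_mk]
        rw [this]
        simp
    have hmem : f * G ∈ I * annIdeal J := Ideal.mul_mem_mul hfI hGann
    rw [hbot, Ideal.mem_bot] at hmem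
    have := congrArg (fun F : C(X, ℝ) => F x) hmem
    simp only [ContinuousMap.mul_apply, ContinuousMap.zero_apply, hG,
      ContinuousMap.coe_mk, hgx] at this
    simp at this
    exact hfx this
  · intro hsub
    rw [eq_bot_iff]
    apply Ideal.mul_le.mpr
    intro f hfI g hg
    rw [Ideal.mem_bot]
    ext y
    simp only [ContinuousMap.mul_apply, ContinuousMap.zero_apply]
    by_cases hfy : f y = 0
    · simp [hfy]
    · have hy : y ∈ closure (cozUnion ((J : Ideal C(X, ℝ)) : Set C(X, ℝ))) := by
        apply hsub
        simp only [cozUnion, mem_iUnion, mem_setOf_eq]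
        exact ⟨f, hfI, hfy⟩
      have hgz : ∀ z ∈ cozUnion ((J : Ideal C(X, ℝ)) : Set C(X, ℝ)), g z = 0 := by
        intro z hz
        simp only [cozUnion, mem_iUnion, mem_setOf_eq] at hz
        obtain ⟨h, hh, hz⟩ := hz
        have := congrArg (fun F : C(X, ℝ) => F z) (hg h hh)
        simp only [ContinuousMap.mul_apply, ContinuousMap.zero_apply] at this
        exact (mul_eq_zero.mp this).resolve_right hz
      have hclosed : closure (cozUnion ((J : Ideal C(X, ℝ)) : Set C(X, ℝ))) ⊆
          g ⁻¹' {0} := closure_minimal (fun z hz => hgz z hz)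
          (isClosed_singleton.preimage g.continuous)
      have : g y = 0 := hclosed hy
      simp [this]
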